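/- arXiv:1503.07578 — 2 statements merged into one kernel-verified Lean document; each statement's English description precedes it below -/
import Mathlib

section
/- Let $d \ge 2$ and let $P$ be a homogeneous polynomial of degree $k$ on $\mathbb{R}^d$ with $(a_{hom})_{ij}\partial_i\partial_j P = 0$, where $a_{hom}$ is a constant matrix. Let $a$ be a smooth uniformly elliptic coefficient field, let $\phi_i$ ($i=1,\dots,d$) be smooth functions satisfying the corrector equation $-\nabla\cdot(a(e_i + \nabla \phi_i)) = 0$, let $q_i := a(e_i + \nabla\phi_i) - a_{hom} e_i$, and let $\sigma_i$ be smooth matrix-valued fields, skew-symmetric pointwise (i.e. $(\sigma_i)_{jk} = -(\sigma_i)_{kj}$), with $\nabla \cdot \sigma_i = q_i$ componentwise. Then the identity $\nabla \cdot \big((\phi_i a - \sigma_i)\nabla \partial_i P\big) = \nabla \cdot \big(a \nabla (P + \phi_i \partial_i P)\big)$ holds (with implicit summation over $i$). Consequently, if $\psi$ satisfies $-\nabla\cdot(a\nabla\psi) = \nabla\cdot((\phi_i a - \sigma_i)\nabla\partial_i P)$, then $u := P + \phi_i\partial_i P + \psi$ satisfies $-\nabla\cdot(a\nabla u) = 0$.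 -/
open Metric MvPolynomial

/-- Partial derivative of a scalar field on `ℝ^d` in the `i`-th coordinate direction. -/
noncomputable def pd {d : ℕ} (f : EuclideanSpace ℝ (Fin d) → ℝ) (i : Fin d)
    (x : EuclideanSpace ℝ (Fin d)) : ℝ :=
  fderiv ℝ f x (EuclideanSpace.single i 1)

section Helpers

variable {d : ℕ} {f g : EuclideanSpace ℝ (Fin d) → ℝ} {i j : Fin d}
  {x : EuclideanSpace ℝ (Fin d)}

lemma cd_dAt {E F : Type*} [NormedAddCommGroup E] [NormedSpace ℝ E]
    [NormedAddCommGroup F] [NormedSpace ℝ F] {f : E → F} {x : E}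
    (h : ContDiff ℝ (⊤ : ℕ∞) f) : DifferentiableAt ℝ f x :=
  (h.differentiable (by simp)).differentiableAt

lemma pd_add (hf : ContDiff ℝ (⊤ : ℕ∞) f) (hg : ContDiff ℝ (⊤ : ℕ∞) g) :
    pd (fun y => f y + g y) i x = pd f i x + pd g i x := by
  unfold pd
  rw [fderiv_fun_add (cd_dAt hf) (cd_dAt hg)]
  simp

lemma pd_sub (hf : ContDiff ℝ (⊤ : ℕ∞) f) (hg : ContDiff ℝ (⊤ : ℕ∞) g) :
    pd (fun y => f y - g y) i x = pd f i x - pd g i x := by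
  unfold pd
  rw [fderiv_fun_sub (cd_dAt hf) (cd_dAt hg)]
  simp

lemma pd_neg : pd (fun y => -f y) i x = - pd f i x := by
  unfold pd
  rw [fderiv_fun_neg]
  simp

lemma pd_mul (hf : ContDiff ℝ (⊤ : ℕ∞) f) (hg : ContDiff ℝ (⊤ : ℕ∞) g) :
    pd (fun y => f y * g y) i x = pd f i x * g x + f x * pd g i x := by
  unfold pd
  rw [fderiv_fun_mul (cd_dAt hf) (cd_dAt hg)]
  simp
  ring

lemma pd_sum {ι : Type*} (s : Finset ι) (F : ι → EuclideanSpace ℝ (Fin d) → ℝ)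
    (h : ∀ j ∈ s, ContDiff ℝ (⊤ : ℕ∞) (F j)) :
    pd (fun y => ∑ j ∈ s, F j y) i x = ∑ j ∈ s, pd (F j) i x := by
  unfold pd
  rw [fderiv_fun_sum (fun j hj => cd_dAt (h j hj))]
  simp

lemma contDiff_pd (hf : ContDiff ℝ (⊤ : ℕ∞) f) (i : Fin d) :
    ContDiff ℝ (⊤ : ℕ∞) (fun x => pd f i x) := by
  unfold pd
  exact (hf.fderiv_right (by simp)).clm_apply contDiff_const

lemma pd_comm (hf : ContDiff ℝ (⊤ : ℕ∞) f) :
    pd (fun y => pd f j y) i x = pd (fun y => pd f i y) j x := by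
  have hd : DifferentiableAt ℝ (fderiv ℝ f) x :=
    cd_dAt (hf.fderiv_right (by simp))
  have h2 : minSmoothness ℝ 2 ≤ ((⊤ : ℕ∞) : WithTop ℕ∞) := by
    rw [minSmoothness_of_isRCLikeNormedField]
    exact WithTop.coe_le_coe.mpr (le_top : (2 : ℕ∞) ≤ ⊤)
  have hsymm := (hf.contDiffAt (x := x)).isSymmSndFDerivAt h2
  unfold pd
  rw [show (fun y => fderiv ℝ f y (EuclideanSpace.single j 1)) =
      fun y => (fderiv ℝ f y) (EuclideanSpace.single j 1) from rfl,
    fderiv_clm_apply hd (differentiableAt_const _),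
    show (fun y => fderiv ℝ f y (EuclideanSpace.single i 1)) =
      fun y => (fderiv ℝ f y) (EuclideanSpace.single i 1) from rfl,
    fderiv_clm_apply hd (differentiableAt_const _)]
  simp
  exact hsymm _ _

lemma sum_skew_pair (s t : Fin d → Fin d → ℝ) (hs : ∀ j l, s j l = - s l j)
    (ht : ∀ j l, t j l = t l j) :
    ∑ j, ∑ l, s j l * t j l = 0 := by
  have h2 : ∑ j, ∑ l, s l j * t l j = ∑ j, ∑ l, s j l * t j l := Finset.sum_comm
  have h : (∑ j, ∑ l, s j l * t j l) = - ∑ j, ∑ l, s j l * t j l := by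
    have e : (∑ j, ∑ l, s j l * t j l) = ∑ j, ∑ l, -(s l j * t l j) := by
      refine Finset.sum_congr rfl fun j _ => Finset.sum_congr rfl fun l _ => ?_
      rw [hs j l, ht j l]; ring
    calc ∑ j, ∑ l, s j l * t j l = ∑ j, ∑ l, -(s l j * t l j) := e
      _ = -(∑ j, ∑ l, s l j * t l j) := by
          simp only [Finset.sum_neg_distrib]
      _ = - ∑ j, ∑ l, s j l * t j l := by rw [h2]
  linarith

lemma contDiff_eval_poly (Q : MvPolynomial (Fin d) ℝ) :
    ContDiff ℝ (⊤ : ℕ∞) (fun x : EuclideanSpace ℝ (Fin d) => eval (fun i => x i) Q) := by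
  induction Q using MvPolynomial.induction_on with
  | C a => simpa using contDiff_const (c := a)
  | add p q hp hq => simpa using hp.add hq
  | mul_X p i hp =>
      have hc : ContDiff ℝ (⊤ : ℕ∞) (fun x : EuclideanSpace ℝ (Fin d) => x i) := by
        simpa using (EuclideanSpace.proj (𝕜 := ℝ) (ι := Fin d) i).contDiff
      simpa using hp.mul hc


lemma sum_alg {d : ℕ} (A : Fin d → ℝ) (pdP : Fin d → ℝ) (pdφ : Fin d → Fin d → ℝ)
    (φv : Fin d → ℝ) (D2 : Fin d → Fin d → ℝ) :
    ∑ l, A l * (pdP l + ∑ i, (pdφ i l * pdP i + φv i * D2 i l))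
    = (∑ i, pdP i * ∑ m, A m * ((if m = i then (1 : ℝ) else 0) + pdφ i m))
      + ∑ i, ∑ l, φv i * A l * D2 i l := by
  simp only [mul_add, Finset.mul_sum, Finset.sum_add_distrib, mul_ite, mul_one, mul_zero,
    Finset.sum_ite_eq, Finset.sum_ite_eq', Finset.mem_univ, if_true]
  have e1 : ∑ x : Fin d, A x * pdP x = ∑ x : Fin d, pdP x * A x :=
    Finset.sum_congr rfl fun x _ => mul_comm _ _
  have e2 : ∑ x : Fin d, ∑ i : Fin d, A x * (pdφ i x * pdP i)
      = ∑ x : Fin d, ∑ i : Fin d, pdP x * (A i * pdφ x i) := by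
    rw [Finset.sum_comm]
    exact Finset.sum_congr rfl fun x _ => Finset.sum_congr rfl fun i _ => by ring
  have e3 : ∑ x : Fin d, ∑ i : Fin d, A x * (φv i * D2 i x)
      = ∑ i : Fin d, ∑ l : Fin d, φv i * A l * D2 i l := by
    rw [Finset.sum_comm]
    exact Finset.sum_congr rfl fun i _ => Finset.sum_congr rfl fun l _ => by ring
  rw [e1, e2, e3]
  ring

end Helpers

theorem key_identity {d : ℕ}
    (ahom : Matrix (Fin d) (Fin d) ℝ)
    (a : EuclideanSpace ℝ (Fin d) → Matrix (Fin d) (Fin d) ℝ)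
    (ha : ∀ i j, ContDiff ℝ (⊤ : ℕ∞) fun x => a x i j)
    (P : EuclideanSpace ℝ (Fin d) → ℝ) (hPc : ContDiff ℝ (⊤ : ℕ∞) P)
    (hPharm : ∀ x, ∑ i, ∑ j, ahom i j * pd (fun y => pd P j y) i x = 0)
    (φ : Fin d → EuclideanSpace ℝ (Fin d) → ℝ)
    (hφ : ∀ i, ContDiff ℝ (⊤ : ℕ∞) (φ i))
    (hcorr : ∀ i x,
      ∑ j, pd (fun y => ∑ l, a y j l * ((if l = i then (1 : ℝ) else 0) + pd (φ i) l y)) j x = 0)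
    (σ : Fin d → EuclideanSpace ℝ (Fin d) → Matrix (Fin d) (Fin d) ℝ)
    (hσ : ∀ i j l, ContDiff ℝ (⊤ : ℕ∞) fun x => σ i x j l)
    (hskew : ∀ i x j l, σ i x j l = - σ i x l j)
    (hdivσ : ∀ i x j,
      ∑ l, pd (fun y => σ i y j l) l x
        = (∑ l, a x j l * ((if l = i then (1 : ℝ) else 0) + pd (φ i) l x)) - ahom j i) :
    ∀ x,
      ∑ j, pd (fun y =>
          ∑ i, ∑ l, (φ i y * a y j l - σ i y j l) * pd (fun z => pd P i z) l y) j x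
        = ∑ j, pd (fun y =>
          ∑ l, a y j l * pd (fun z => P z + ∑ i, φ i z * pd P i z) l y) j x := by
  intro x
  -- basic smoothness facts
  have hD1 : ∀ i : Fin d, ContDiff ℝ (⊤ : ℕ∞) (fun y => pd P i y) := fun i => contDiff_pd hPc i
  have hD2 : ∀ i l : Fin d, ContDiff ℝ (⊤ : ℕ∞) (fun y => pd (fun z => pd P i z) l y) :=
    fun i l => contDiff_pd (hD1 i) l
  have hcC : ∀ i j : Fin d, ContDiff ℝ (⊤ : ℕ∞)
      (fun y => ∑ l, a y j l * ((if l = i then (1 : ℝ) else 0) + pd (φ i) l y)) :=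
    fun i j => ContDiff.sum fun l _ => (ha j l).mul (contDiff_const.add (contDiff_pd (hφ i) l))
  have hA : ∀ j : Fin d, ContDiff ℝ (⊤ : ℕ∞)
      (fun y => ∑ i, ∑ l, φ i y * a y j l * pd (fun z => pd P i z) l y) :=
    fun j => ContDiff.sum fun i _ => ContDiff.sum fun l _ => ((hφ i).mul (ha j l)).mul (hD2 i l)
  have hB : ∀ j : Fin d, ContDiff ℝ (⊤ : ℕ∞)
      (fun y => ∑ i, ∑ l, σ i y j l * pd (fun z => pd P i z) l y) :=
    fun j => ContDiff.sum fun i _ => ContDiff.sum fun l _ => (hσ i j l).mul (hD2 i l)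
  -- step 1: split the left inner function into the φ-part and the σ-part
  have step1 : ∀ j : Fin d,
      pd (fun y => ∑ i, ∑ l, (φ i y * a y j l - σ i y j l) * pd (fun z => pd P i z) l y) j x
      = pd (fun y => ∑ i, ∑ l, φ i y * a y j l * pd (fun z => pd P i z) l y) j x
        - pd (fun y => ∑ i, ∑ l, σ i y j l * pd (fun z => pd P i z) l y) j x := by
    intro j
    have hfe : (fun y => ∑ i, ∑ l, (φ i y * a y j l - σ i y j l) * pd (fun z => pd P i z) l y)
        = fun y => (∑ i, ∑ l, φ i y * a y j l * pd (fun z => pd P i z) l y)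
          - ∑ i, ∑ l, σ i y j l * pd (fun z => pd P i z) l y := by
      funext y
      rw [← Finset.sum_sub_distrib]
      refine Finset.sum_congr rfl fun i _ => ?_
      rw [← Finset.sum_sub_distrib]
      exact Finset.sum_congr rfl fun l _ => by ring
    rw [hfe]
    exact pd_sub (hA j) (hB j)
  -- divergence of each row of σ in the first index
  have hdivσ' : ∀ i l : Fin d, ∑ j, pd (fun y => σ i y j l) j x
      = ahom l i - ∑ m, a x l m * ((if m = i then (1 : ℝ) else 0) + pd (φ i) m x) := by
    intro i l
    have h1 : ∀ j : Fin d, pd (fun y => σ i y j l) j x = - pd (fun y => σ i y l j) j x := by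
      intro j
      have he : (fun y => σ i y j l) = fun y => -(σ i y l j) := funext fun y => hskew i y j l
      rw [he, pd_neg]
    calc ∑ j, pd (fun y => σ i y j l) j x
        = ∑ j, -pd (fun y => σ i y l j) j x := Finset.sum_congr rfl fun j _ => h1 j
      _ = -(∑ j, pd (fun y => σ i y l j) j x) := by simp only [Finset.sum_neg_distrib]
      _ = ahom l i - ∑ m, a x l m * ((if m = i then (1 : ℝ) else 0) + pd (φ i) m x) := by
          rw [hdivσ i x l]; ring
  -- evaluation of the σ part
  have hBtot : ∑ j, pd (fun y => ∑ i, ∑ l, σ i y j l * pd (fun z => pd P i z) l y) j x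
      = ∑ i, ∑ l, (ahom l i - ∑ m, a x l m * ((if m = i then (1 : ℝ) else 0) + pd (φ i) m x))
          * pd (fun z => pd P i z) l x := by
    have e1 : ∀ j : Fin d,
        pd (fun y => ∑ i, ∑ l, σ i y j l * pd (fun z => pd P i z) l y) j x
        = ∑ i, ∑ l, (pd (fun y => σ i y j l) j x * pd (fun z => pd P i z) l x
            + σ i x j l * pd (fun y => pd (fun z => pd P i z) l y) j x) := by
      intro j
      have e11 : pd (fun y => ∑ i, ∑ l, σ i y j l * pd (fun z => pd P i z) l y) j x
          = ∑ i, pd (fun y => ∑ l, σ i y j l * pd (fun z => pd P i z) l y) j x :=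
        pd_sum _ _ (fun i _ => ContDiff.sum fun l _ => (hσ i j l).mul (hD2 i l))
      rw [e11]
      refine Finset.sum_congr rfl fun i _ => ?_
      have e12 : pd (fun y => ∑ l, σ i y j l * pd (fun z => pd P i z) l y) j x
          = ∑ l, pd (fun y => σ i y j l * pd (fun z => pd P i z) l y) j x :=
        pd_sum _ _ (fun l _ => (hσ i j l).mul (hD2 i l))
      rw [e12]
      exact Finset.sum_congr rfl fun l _ => pd_mul (hσ i j l) (hD2 i l)
    calc ∑ j, pd (fun y => ∑ i, ∑ l, σ i y j l * pd (fun z => pd P i z) l y) j x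
        = ∑ j, ∑ i, ∑ l, (pd (fun y => σ i y j l) j x * pd (fun z => pd P i z) l x
            + σ i x j l * pd (fun y => pd (fun z => pd P i z) l y) j x) :=
          Finset.sum_congr rfl fun j _ => e1 j
      _ = ∑ i, ∑ j, ∑ l, (pd (fun y => σ i y j l) j x * pd (fun z => pd P i z) l x
            + σ i x j l * pd (fun y => pd (fun z => pd P i z) l y) j x) := Finset.sum_comm
      _ = ∑ i, ((∑ j, ∑ l, pd (fun y => σ i y j l) j x * pd (fun z => pd P i z) l x)
            + ∑ j, ∑ l, σ i x j l * pd (fun y => pd (fun z => pd P i z) l y) j x) := by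
          refine Finset.sum_congr rfl fun i _ => ?_
          rw [← Finset.sum_add_distrib]
          exact Finset.sum_congr rfl fun j _ => Finset.sum_add_distrib
      _ = ∑ i, ∑ j, ∑ l, pd (fun y => σ i y j l) j x * pd (fun z => pd P i z) l x := by
          refine Finset.sum_congr rfl fun i _ => ?_
          rw [sum_skew_pair (fun j l => σ i x j l)
              (fun j l => pd (fun y => pd (fun z => pd P i z) l y) j x)
              (fun j l => hskew i x j l)
              (fun j l => pd_comm (hD1 i)), add_zero]
      _ = ∑ i, ∑ l, ∑ j, pd (fun y => σ i y j l) j x * pd (fun z => pd P i z) l x :=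
          Finset.sum_congr rfl fun i _ => Finset.sum_comm
      _ = ∑ i, ∑ l, (ahom l i - ∑ m, a x l m * ((if m = i then (1 : ℝ) else 0) + pd (φ i) m x))
            * pd (fun z => pd P i z) l x := by
          refine Finset.sum_congr rfl fun i _ => Finset.sum_congr rfl fun l _ => ?_
          rw [← Finset.sum_mul, hdivσ' i l]
  -- the ahom part vanishes by harmonicity
  have hharm' : ∑ i, ∑ l, ahom l i * pd (fun z => pd P i z) l x = 0 := by
    have h := hPharm x
    rw [Finset.sum_comm]
    exact h
  -- the corrector trick
  have hcorr2 : ∀ i : Fin d,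
      ∑ l, (∑ m, a x l m * ((if m = i then (1 : ℝ) else 0) + pd (φ i) m x))
          * pd (fun z => pd P i z) l x
      = ∑ l, pd (fun y => pd P i y
          * ∑ m, a y l m * ((if m = i then (1 : ℝ) else 0) + pd (φ i) m y)) l x := by
    intro i
    have e : ∀ l : Fin d, pd (fun y => pd P i y
        * ∑ m, a y l m * ((if m = i then (1 : ℝ) else 0) + pd (φ i) m y)) l x
        = pd (fun y => pd P i y) l x
            * (∑ m, a x l m * ((if m = i then (1 : ℝ) else 0) + pd (φ i) m x))
          + pd P i x * pd (fun y =>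
              ∑ m, a y l m * ((if m = i then (1 : ℝ) else 0) + pd (φ i) m y)) l x :=
      fun l => pd_mul (hD1 i) (hcC i l)
    calc ∑ l, (∑ m, a x l m * ((if m = i then (1 : ℝ) else 0) + pd (φ i) m x))
            * pd (fun z => pd P i z) l x
        = ∑ l, (pd (fun y => pd P i y) l x
            * (∑ m, a x l m * ((if m = i then (1 : ℝ) else 0) + pd (φ i) m x))
          + pd P i x * pd (fun y =>
              ∑ m, a y l m * ((if m = i then (1 : ℝ) else 0) + pd (φ i) m y)) l x) := by
          rw [Finset.sum_add_distrib, ← Finset.mul_sum, hcorr i x, mul_zero, add_zero]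
          exact Finset.sum_congr rfl fun l _ => mul_comm _ _
      _ = ∑ l, pd (fun y => pd P i y
          * ∑ m, a y l m * ((if m = i then (1 : ℝ) else 0) + pd (φ i) m y)) l x :=
          (Finset.sum_congr rfl fun l _ => (e l).symm)
  -- the left-hand side
  have hLHS : ∑ j, pd (fun y =>
        ∑ i, ∑ l, (φ i y * a y j l - σ i y j l) * pd (fun z => pd P i z) l y) j x
      = (∑ j, pd (fun y => ∑ i, ∑ l, φ i y * a y j l * pd (fun z => pd P i z) l y) j x)
        + ∑ i, ∑ l, pd (fun y => pd P i y
            * ∑ m, a y l m * ((if m = i then (1 : ℝ) else 0) + pd (φ i) m y)) l x := by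
    calc ∑ j, pd (fun y =>
          ∑ i, ∑ l, (φ i y * a y j l - σ i y j l) * pd (fun z => pd P i z) l y) j x
        = ∑ j, (pd (fun y => ∑ i, ∑ l, φ i y * a y j l * pd (fun z => pd P i z) l y) j x
            - pd (fun y => ∑ i, ∑ l, σ i y j l * pd (fun z => pd P i z) l y) j x) :=
          Finset.sum_congr rfl fun j _ => step1 j
      _ = (∑ j, pd (fun y => ∑ i, ∑ l, φ i y * a y j l * pd (fun z => pd P i z) l y) j x)
          - ∑ j, pd (fun y => ∑ i, ∑ l, σ i y j l * pd (fun z => pd P i z) l y) j x :=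
          Finset.sum_sub_distrib _ _
      _ = (∑ j, pd (fun y => ∑ i, ∑ l, φ i y * a y j l * pd (fun z => pd P i z) l y) j x)
          + ∑ i, ∑ l, pd (fun y => pd P i y
              * ∑ m, a y l m * ((if m = i then (1 : ℝ) else 0) + pd (φ i) m y)) l x := by
          rw [hBtot]
          have expand : ∑ i, ∑ l,
              (ahom l i - ∑ m, a x l m * ((if m = i then (1 : ℝ) else 0) + pd (φ i) m x))
                * pd (fun z => pd P i z) l x
              = (∑ i, ∑ l, ahom l i * pd (fun z => pd P i z) l x)
                - ∑ i, ∑ l, (∑ m, a x l m * ((if m = i then (1 : ℝ) else 0) + pd (φ i) m x))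
                    * pd (fun z => pd P i z) l x := by
            rw [← Finset.sum_sub_distrib]
            refine Finset.sum_congr rfl fun i _ => ?_
            rw [← Finset.sum_sub_distrib]
            exact Finset.sum_congr rfl fun l _ => by ring
          rw [expand, hharm']
          have : ∑ i, ∑ l, (∑ m, a x l m * ((if m = i then (1 : ℝ) else 0) + pd (φ i) m x))
              * pd (fun z => pd P i z) l x
              = ∑ i, ∑ l, pd (fun y => pd P i y
                  * ∑ m, a y l m * ((if m = i then (1 : ℝ) else 0) + pd (φ i) m y)) l x :=
            Finset.sum_congr rfl fun i _ => hcorr2 i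
          rw [this]
          ring
  -- gradient expansion for the right-hand side
  have hSsum : ContDiff ℝ (⊤ : ℕ∞) (fun z => ∑ i, φ i z * pd P i z) :=
    ContDiff.sum fun i _ => (hφ i).mul (hD1 i)
  have hgrad : ∀ (l : Fin d) (y : EuclideanSpace ℝ (Fin d)),
      pd (fun z => P z + ∑ i, φ i z * pd P i z) l y
      = pd P l y + ∑ i, (pd (φ i) l y * pd P i y + φ i y * pd (fun z => pd P i z) l y) := by
    intro l y
    have h1 : pd (fun z => P z + ∑ i, φ i z * pd P i z) l y
        = pd P l y + pd (fun z => ∑ i, φ i z * pd P i z) l y := pd_add hPc hSsum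
    have h2 : pd (fun z => ∑ i, φ i z * pd P i z) l y
        = ∑ i, pd (fun z => φ i z * pd P i z) l y :=
      pd_sum _ _ (fun i _ => (hφ i).mul (hD1 i))
    have h3 : ∀ i : Fin d, pd (fun z => φ i z * pd P i z) l y
        = pd (φ i) l y * pd P i y + φ i y * pd (fun z => pd P i z) l y :=
      fun i => pd_mul (hφ i) (hD1 i)
    rw [h1, h2]
    exact congrArg (fun t => pd P l y + t) (Finset.sum_congr rfl fun i _ => h3 i)
  have hRHSfun : ∀ j : Fin d,
      (fun y => ∑ l, a y j l * pd (fun z => P z + ∑ i, φ i z * pd P i z) l y)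
      = fun y => (∑ i, pd P i y
            * ∑ m, a y j m * ((if m = i then (1 : ℝ) else 0) + pd (φ i) m y))
          + ∑ i, ∑ l, φ i y * a y j l * pd (fun z => pd P i z) l y := by
    intro j
    funext y
    calc ∑ l, a y j l * pd (fun z => P z + ∑ i, φ i z * pd P i z) l y
        = ∑ l, a y j l * (pd P l y
            + ∑ i, (pd (φ i) l y * pd P i y + φ i y * pd (fun z => pd P i z) l y)) :=
          Finset.sum_congr rfl fun l _ => by rw [hgrad l y]
      _ = _ := sum_alg (fun l => a y j l) (fun i => pd P i y) (fun i l => pd (φ i) l y)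
            (fun i => φ i y) (fun i l => pd (fun z => pd P i z) l y)
  have hRHS : ∑ j, pd (fun y =>
        ∑ l, a y j l * pd (fun z => P z + ∑ i, φ i z * pd P i z) l y) j x
      = (∑ j, pd (fun y => ∑ i, ∑ l, φ i y * a y j l * pd (fun z => pd P i z) l y) j x)
        + ∑ i, ∑ l, pd (fun y => pd P i y
            * ∑ m, a y l m * ((if m = i then (1 : ℝ) else 0) + pd (φ i) m y)) l x := by
    have e1 : ∀ j : Fin d,
        pd (fun y => ∑ l, a y j l * pd (fun z => P z + ∑ i, φ i z * pd P i z) l y) j x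
        = (∑ i, pd (fun y => pd P i y
              * ∑ m, a y j m * ((if m = i then (1 : ℝ) else 0) + pd (φ i) m y)) j x)
          + pd (fun y => ∑ i, ∑ l, φ i y * a y j l * pd (fun z => pd P i z) l y) j x := by
      intro j
      rw [hRHSfun j]
      have hadd : pd (fun y =>
          (∑ i, pd P i y * ∑ m, a y j m * ((if m = i then (1 : ℝ) else 0) + pd (φ i) m y))
          + ∑ i, ∑ l, φ i y * a y j l * pd (fun z => pd P i z) l y) j x
          = pd (fun y => ∑ i, pd P i y
              * ∑ m, a y j m * ((if m = i then (1 : ℝ) else 0) + pd (φ i) m y)) j x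
            + pd (fun y => ∑ i, ∑ l, φ i y * a y j l * pd (fun z => pd P i z) l y) j x :=
        pd_add (ContDiff.sum fun i _ => (hD1 i).mul (hcC i j)) (hA j)
      rw [hadd]
      congr 1
      exact pd_sum _ _ (fun i _ => (hD1 i).mul (hcC i j))
    calc ∑ j, pd (fun y =>
          ∑ l, a y j l * pd (fun z => P z + ∑ i, φ i z * pd P i z) l y) j x
        = ∑ j, ((∑ i, pd (fun y => pd P i y
              * ∑ m, a y j m * ((if m = i then (1 : ℝ) else 0) + pd (φ i) m y)) j x)
            + pd (fun y => ∑ i, ∑ l, φ i y * a y j l * pd (fun z => pd P i z) l y) j x) :=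
          Finset.sum_congr rfl fun j _ => e1 j
      _ = (∑ j, ∑ i, pd (fun y => pd P i y
              * ∑ m, a y j m * ((if m = i then (1 : ℝ) else 0) + pd (φ i) m y)) j x)
          + ∑ j, pd (fun y => ∑ i, ∑ l, φ i y * a y j l * pd (fun z => pd P i z) l y) j x :=
          Finset.sum_add_distrib
      _ = (∑ i, ∑ j, pd (fun y => pd P i y
              * ∑ m, a y j m * ((if m = i then (1 : ℝ) else 0) + pd (φ i) m y)) j x)
          + ∑ j, pd (fun y => ∑ i, ∑ l, φ i y * a y j l * pd (fun z => pd P i z) l y) j x := by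
          exact congrArg (fun t => t
            + ∑ j, pd (fun y => ∑ i, ∑ l, φ i y * a y j l * pd (fun z => pd P i z) l y) j x)
            Finset.sum_comm
      _ = (∑ j, pd (fun y => ∑ i, ∑ l, φ i y * a y j l * pd (fun z => pd P i z) l y) j x)
          + ∑ i, ∑ l, pd (fun y => pd P i y
              * ∑ m, a y l m * ((if m = i then (1 : ℝ) else 0) + pd (φ i) m y)) l x := by
          ring
  rw [hLHS, hRHS]

/-- Proposition 2.2 of the paper: for an `a_hom`-harmonic homogeneous polynomial `P` of
degree `k`, correctors `φ_i`, fluxes `q_i`, and skew-symmetric flux potentials `σ_i` with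
`∇⋅σ_i = q_i`, one has `∇⋅((φ_i a - σ_i)∇∂_i P) = ∇⋅(a∇(P + φ_i ∂_i P))`; consequently any
`ψ` with `-∇⋅(a∇ψ) = ∇⋅((φ_i a - σ_i)∇∂_i P)` yields an `a`-harmonic
`u = P + φ_i ∂_i P + ψ`. -/
theorem corrector_polynomial_identity (d k : ℕ) (hd : 2 ≤ d) (hk : 2 ≤ k)
    (lam : ℝ) (hlam : 0 < lam)
    (ahom : Matrix (Fin d) (Fin d) ℝ)
    (a : EuclideanSpace ℝ (Fin d) → Matrix (Fin d) (Fin d) ℝ)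
    (ha : ∀ i j, ContDiff ℝ (⊤ : ℕ∞) fun x => a x i j)
    (hell : ∀ x (ξ : EuclideanSpace ℝ (Fin d)),
      lam * ‖ξ‖ ^ 2 ≤ ∑ i, ξ i * ∑ j, a x i j * ξ j)
    (Q : MvPolynomial (Fin d) ℝ) (hQ : Q.IsHomogeneous k)
    (P : EuclideanSpace ℝ (Fin d) → ℝ)
    (hP : P = fun x => eval (fun i => x i) Q)
    (hPharm : ∀ x, ∑ i, ∑ j, ahom i j * pd (fun y => pd P j y) i x = 0)
    (φ : Fin d → EuclideanSpace ℝ (Fin d) → ℝ)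
    (hφ : ∀ i, ContDiff ℝ (⊤ : ℕ∞) (φ i))
    -- corrector equation: `-∇⋅(a(e_i + ∇φ_i)) = 0`
    (hcorr : ∀ i x,
      ∑ j, pd (fun y => ∑ l, a y j l * ((if l = i then (1 : ℝ) else 0) + pd (φ i) l y)) j x = 0)
    (σ : Fin d → EuclideanSpace ℝ (Fin d) → Matrix (Fin d) (Fin d) ℝ)
    (hσ : ∀ i j l, ContDiff ℝ (⊤ : ℕ∞) fun x => σ i x j l)
    (hskew : ∀ i x j l, σ i x j l = - σ i x l j)
    -- flux potential: `∇⋅σ_i = q_i := a(e_i + ∇φ_i) - a_hom e_i`, componentwise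
    (hdivσ : ∀ i x j,
      ∑ l, pd (fun y => σ i y j l) l x
        = (∑ l, a x j l * ((if l = i then (1 : ℝ) else 0) + pd (φ i) l x)) - ahom j i) :
    (∀ x,
      ∑ j, pd (fun y =>
          ∑ i, ∑ l, (φ i y * a y j l - σ i y j l) * pd (fun z => pd P i z) l y) j x
        = ∑ j, pd (fun y =>
          ∑ l, a y j l * pd (fun z => P z + ∑ i, φ i z * pd P i z) l y) j x) ∧
    (∀ ψ : EuclideanSpace ℝ (Fin d) → ℝ, ContDiff ℝ (⊤ : ℕ∞) ψ →
      (∀ x, -(∑ j, pd (fun y => ∑ l, a y j l * pd ψ l y) j x)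
          = ∑ j, pd (fun y =>
              ∑ i, ∑ l, (φ i y * a y j l - σ i y j l) * pd (fun z => pd P i z) l y) j x) →
      ∀ x, ∑ j, pd (fun y =>
          ∑ l, a y j l *
            pd (fun z => P z + (∑ i, φ i z * pd P i z) + ψ z) l y) j x = 0) := by
  have hPc : ContDiff ℝ (⊤ : ℕ∞) P := by rw [hP]; exact contDiff_eval_poly Q
  have key := key_identity ahom a ha P hPc hPharm φ hφ hcorr σ hσ hskew hdivσ
  refine ⟨key, ?_⟩
  intro ψ hψ hψeq x
  have hD1 : ∀ i : Fin d, ContDiff ℝ (⊤ : ℕ∞) (fun y => pd P i y) := fun i => contDiff_pd hPc i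
  have hSsum : ContDiff ℝ (⊤ : ℕ∞) (fun z => ∑ i, φ i z * pd P i z) :=
    ContDiff.sum fun i _ => (hφ i).mul (hD1 i)
  have hPS : ContDiff ℝ (⊤ : ℕ∞) (fun z => P z + ∑ i, φ i z * pd P i z) := hPc.add hSsum
  have hsplit : ∀ j : Fin d,
      (fun y => ∑ l, a y j l * pd (fun z => P z + (∑ i, φ i z * pd P i z) + ψ z) l y)
      = fun y => (∑ l, a y j l * pd (fun z => P z + ∑ i, φ i z * pd P i z) l y)
          + ∑ l, a y j l * pd ψ l y := by
    intro j
    funext y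
    rw [← Finset.sum_add_distrib]
    refine Finset.sum_congr rfl fun l _ => ?_
    have hp : pd (fun z => P z + (∑ i, φ i z * pd P i z) + ψ z) l y
        = pd (fun z => P z + ∑ i, φ i z * pd P i z) l y + pd ψ l y := pd_add hPS hψ
    rw [hp]
    ring
  have hstep : ∀ j : Fin d,
      pd (fun y => ∑ l, a y j l * pd (fun z => P z + (∑ i, φ i z * pd P i z) + ψ z) l y) j x
      = pd (fun y => ∑ l, a y j l * pd (fun z => P z + ∑ i, φ i z * pd P i z) l y) j x
        + pd (fun y => ∑ l, a y j l * pd ψ l y) j x := by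
    intro j
    rw [hsplit j]
    exact pd_add (ContDiff.sum fun l _ => (ha j l).mul (contDiff_pd hPS l))
      (ContDiff.sum fun l _ => (ha j l).mul (contDiff_pd hψ l))
  calc ∑ j, pd (fun y =>
        ∑ l, a y j l * pd (fun z => P z + (∑ i, φ i z * pd P i z) + ψ z) l y) j x
      = ∑ j, (pd (fun y =>
            ∑ l, a y j l * pd (fun z => P z + ∑ i, φ i z * pd P i z) l y) j x
          + pd (fun y => ∑ l, a y j l * pd ψ l y) j x) :=
        Finset.sum_congr rfl fun j _ => hstep j
    _ = (∑ j, pd (fun y =>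
            ∑ l, a y j l * pd (fun z => P z + ∑ i, φ i z * pd P i z) l y) j x)
        + ∑ j, pd (fun y => ∑ l, a y j l * pd ψ l y) j x := Finset.sum_add_distrib
    _ = 0 := by
        have h1 := key x
        have h2 := hψeq x
        linarith
end

section
/- Let $d \ge 2$, $\rho > 0$, and let $\phi = (\phi_1, \dots, \phi_d)$ be functions in $H^1(B_\rho)$ satisfying the smallness condition $\rho^{-2}\fint_{B_\rho} |\phi|^2 \, dx \le \varepsilon_0^2$ for a sufficiently small constant $\varepsilon_0 = \varepsilon_0(d) > 0$. Then for every $b \in \mathbb{R}^d$, $|b|^2 \le C(d) \fint_{B_\rho} |\nabla(b_i(x_i + \phi_i))|^2 \, dx$. -/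
open MeasureTheory Metric

/-!
Test `∂ⱼu = bⱼ + ∂ⱼw`, where `u = b·(x + φ)` and `w = b·φ`, against the C¹ bump
`η = ((ρ² - |x|²)₊)²`, which vanishes to first order on `∂B_ρ`. Integrating by parts over `B_ρ`,
`bⱼ ∫η = ∫ η ∂ⱼu + ∫ ∂ⱼη w`. By Cauchy–Schwarz and the elementary bounds `η ≤ ρ⁴`,
`|∇η|² ≤ 16ρ⁶` and `η ≥ 9ρ⁴/16` on `B_{ρ/2}`, this gives
`κ² |b|² ≤ 2 ⨍|∇u|² + 32 ρ⁻² ⨍|φ|² |b|²` with `κ = 9/16 · 2⁻ᵈ`, and the last term is absorbed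
as soon as `ε₀ ≤ κ/8`. The test function replaces the Poincaré inequality.
-/

open Filter Topology Asymptotics
open scoped RealInnerProductSpace

theorem Continuous.integrableOn_ball {E : Type*} [NormedAddCommGroup E] [NormedSpace ℝ E]
    [FiniteDimensional ℝ E] [MeasurableSpace E] [BorelSpace E] {μ : Measure E}
    [IsFiniteMeasureOnCompacts μ] {f : E → ℝ} (hf : Continuous f) (x : E) (r : ℝ) :
    IntegrableOn f (ball x r) μ :=
  (hf.continuousOn.integrableOn_compact (isCompact_closedBall x r)).mono_set
    ball_subset_closedBall

theorem sq_integral_mul_le_integral_sq_mul_integral_sq {α : Type*} [MeasurableSpace α]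
    {μ : Measure α} {f g : α → ℝ} (hf : Integrable (fun x => f x ^ 2) μ)
    (hg : Integrable (fun x => g x ^ 2) μ) (hfg : Integrable (fun x => f x * g x) μ) :
    (∫ x, f x * g x ∂μ) ^ 2 ≤ (∫ x, f x ^ 2 ∂μ) * ∫ x, g x ^ 2 ∂μ := by
  have hquad : ∀ t : ℝ, 0 ≤ (∫ x, g x ^ 2 ∂μ) * (t * t) + 2 * (∫ x, f x * g x ∂μ) * t +
      ∫ x, f x ^ 2 ∂μ := by
    intro t
    have hexpand : ∫ x, (f x + t * g x) ^ 2 ∂μ =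
        (∫ x, g x ^ 2 ∂μ) * (t * t) + 2 * (∫ x, f x * g x ∂μ) * t + ∫ x, f x ^ 2 ∂μ := by
      simp_rw [fun x => show (f x + t * g x) ^ 2 =
        t * t * g x ^ 2 + 2 * t * (f x * g x) + f x ^ 2 by ring]
      have hsum : Integrable (fun x => t * t * g x ^ 2 + 2 * t * (f x * g x)) μ :=
        (hg.const_mul _).add (hfg.const_mul _)
      rw [integral_add hsum hf, integral_add (hg.const_mul _) (hfg.const_mul _),
        integral_const_mul, integral_const_mul]
      ring
    exact hexpand ▸ integral_nonneg fun x => sq_nonneg _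
  have := discrim_le_zero hquad
  rw [discrim] at this
  nlinarith

theorem setIntegral_le_mul_measureReal {α : Type*} [MeasurableSpace α] {μ : Measure α}
    {s : Set α} {f : α → ℝ} {C : ℝ} (hs : μ s < ⊤) (hC : ∀ x ∈ s, |f x| ≤ C) :
    ∫ x in s, f x ∂μ ≤ C * μ.real s :=
  (Real.le_norm_self _).trans (norm_setIntegral_le_of_norm_le_const hs hC)

theorem hasDerivAt_max_zero_sq (s : ℝ) :
    HasDerivAt (fun t : ℝ => max t 0 ^ 2) (2 * max s 0) s := by
  rcases lt_trichotomy s 0 with hs | rfl | hs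
  · have hloc : (fun t : ℝ => max t 0 ^ 2) =ᶠ[𝓝 s] fun _ => 0 := by
      filter_upwards [eventually_lt_nhds hs] with t ht
      simp [max_eq_right ht.le]
    simpa [max_eq_right hs.le] using (hasDerivAt_const s (0 : ℝ)).congr_of_eventuallyEq hloc
  · rw [hasDerivAt_iff_isLittleO_nhds_zero]
    simp only [zero_add, max_self, ne_eq, OfNat.ofNat_ne_zero, not_false_eq_true, zero_pow,
      sub_zero, mul_zero, smul_zero]
    refine IsBigO.trans_isLittleO ?_ (isLittleO_pow_id one_lt_two)
    refine IsBigO.of_bound 1 (Eventually.of_forall fun h => ?_)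
    simp only [norm_pow, Real.norm_eq_abs, one_mul]
    rw [abs_of_nonneg (le_max_right h 0)]
    gcongr
    exact max_le (le_abs_self h) (abs_nonneg h)
  · have hloc : (fun t : ℝ => max t 0 ^ 2) =ᶠ[𝓝 s] fun t => t ^ 2 := by
      filter_upwards [eventually_gt_nhds hs] with t ht
      simp [max_eq_left ht.le]
    simpa [max_eq_left hs.le] using (hasDerivAt_pow 2 s).congr_of_eventuallyEq hloc

section Bump

variable {E : Type*} [NormedAddCommGroup E] {ρ : ℝ}

noncomputable def ballBump (ρ : ℝ) (x : E) : ℝ := max (ρ ^ 2 - ‖x‖ ^ 2) 0 ^ 2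

theorem ballBump_nonneg (ρ : ℝ) (x : E) : 0 ≤ ballBump ρ x := sq_nonneg _

theorem ballBump_le (ρ : ℝ) (x : E) : ballBump ρ x ≤ ρ ^ 4 := by
  have h : max (ρ ^ 2 - ‖x‖ ^ 2) 0 ≤ ρ ^ 2 := max_le (by nlinarith [sq_nonneg ‖x‖]) (sq_nonneg ρ)
  calc ballBump ρ x ≤ (ρ ^ 2) ^ 2 := pow_le_pow_left₀ (le_max_right _ _) h 2
    _ = ρ ^ 4 := by ring

theorem le_ballBump {x : E} (hx : ‖x‖ ≤ ρ / 2) : 9 / 16 * ρ ^ 4 ≤ ballBump ρ x := by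
  have hx0 := norm_nonneg x
  have h : 3 / 4 * ρ ^ 2 ≤ max (ρ ^ 2 - ‖x‖ ^ 2) 0 :=
    le_max_of_le_left (by nlinarith)
  calc 9 / 16 * ρ ^ 4 = (3 / 4 * ρ ^ 2) ^ 2 := by ring
    _ ≤ ballBump ρ x := pow_le_pow_left₀ (by positivity) h 2

theorem max_sq_sub_norm_sq_eq_zero (hρ : 0 ≤ ρ) {x : E} (hx : x ∉ ball 0 ρ) :
    max (ρ ^ 2 - ‖x‖ ^ 2) 0 = 0 := by
  rw [mem_ball_zero_iff, not_lt] at hx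
  exact max_eq_right (by nlinarith)

theorem ballBump_eq_zero (hρ : 0 ≤ ρ) {x : E} (hx : x ∉ ball 0 ρ) : ballBump ρ x = 0 := by
  rw [ballBump, max_sq_sub_norm_sq_eq_zero hρ hx, zero_pow two_ne_zero]

theorem hasCompactSupport_ballBump [ProperSpace E] (hρ : 0 ≤ ρ) :
    HasCompactSupport (ballBump ρ : E → ℝ) :=
  HasCompactSupport.intro (isCompact_closedBall 0 ρ) fun _ hx =>
    ballBump_eq_zero hρ fun h => hx (ball_subset_closedBall h)

variable [InnerProductSpace ℝ E]

theorem hasFDerivAt_ballBump (ρ : ℝ) (x : E) :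
    HasFDerivAt (ballBump ρ) ((-4 * max (ρ ^ 2 - ‖x‖ ^ 2) 0) • innerSL ℝ x) x := by
  have hq : HasFDerivAt (fun y : E => ρ ^ 2 - ‖y‖ ^ 2) (-(2 • innerSL ℝ x)) x :=
    (hasStrictFDerivAt_norm_sq x).hasFDerivAt.const_sub _
  refine ((hasDerivAt_max_zero_sq _).comp_hasFDerivAt x hq).congr_fderiv ?_
  ext v
  simp only [smul_neg, neg_apply, smul_apply, coe_innerSL_apply, nsmul_eq_mul, Nat.cast_ofNat,
    smul_eq_mul]
  ring

theorem fderiv_ballBump_apply (ρ : ℝ) (x v : E) :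
    fderiv ℝ (ballBump ρ) x v = -4 * max (ρ ^ 2 - ‖x‖ ^ 2) 0 * ⟪x, v⟫ := by
  simp [(hasFDerivAt_ballBump ρ x).fderiv]

theorem fderiv_ballBump_eq_zero (hρ : 0 ≤ ρ) {x : E} (hx : x ∉ ball 0 ρ) :
    fderiv ℝ (ballBump ρ) x = 0 := by
  ext v
  rw [fderiv_ballBump_apply, max_sq_sub_norm_sq_eq_zero hρ hx, mul_zero, zero_mul,
    zero_apply]

theorem differentiable_ballBump (ρ : ℝ) : Differentiable ℝ (ballBump ρ : E → ℝ) :=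
  fun x => (hasFDerivAt_ballBump ρ x).differentiableAt

theorem continuous_fderiv_ballBump_apply (ρ : ℝ) (v : E) :
    Continuous fun x => fderiv ℝ (ballBump ρ) x v := by
  simp only [fderiv_ballBump_apply]
  fun_prop

end Bump

section BallIntegrals

variable {E : Type*} [NormedAddCommGroup E] [InnerProductSpace ℝ E] [FiniteDimensional ℝ E]
  [MeasurableSpace E] [BorelSpace E] (μ : Measure E) [μ.IsAddHaarMeasure] {ρ : ℝ}

theorem setIntegral_ballBump_mul_fderiv (hρ : 0 ≤ ρ) {f : E → ℝ} (hf : ContDiff ℝ 1 f)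
    (v : E) :
    ∫ x in ball 0 ρ, ballBump ρ x * fderiv ℝ f x v ∂μ =
      -∫ x in ball 0 ρ, fderiv ℝ (ballBump ρ) x v * f x ∂μ := by
  have hη := hasCompactSupport_ballBump (E := E) hρ
  have hη' := hη.fderiv_apply (𝕜 := ℝ) v
  have hηc := (differentiable_ballBump (E := E) ρ).continuous
  have hη'c := continuous_fderiv_ballBump_apply (E := E) ρ v
  have hf'c : Continuous fun x => fderiv ℝ f x v :=
    (hf.continuous_fderiv one_ne_zero).clm_apply continuous_const
  rw [setIntegral_eq_integral_of_forall_compl_eq_zero fun x hx => by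
      rw [ballBump_eq_zero hρ hx, zero_mul],
    setIntegral_eq_integral_of_forall_compl_eq_zero fun x hx => by
      rw [fderiv_ballBump_eq_zero hρ hx, zero_apply, zero_mul]]
  exact integral_mul_fderiv_eq_neg_fderiv_mul_of_integrable
    ((hη'c.mul hf.continuous).integrable_of_hasCompactSupport hη'.mul_right)
    ((hηc.mul hf'c).integrable_of_hasCompactSupport hη.mul_right)
    ((hηc.mul hf.continuous).integrable_of_hasCompactSupport hη.mul_right)
    (fun x _ => differentiable_ballBump ρ x) (fun x _ => hf.differentiable one_ne_zero x)

theorem le_setIntegral_ballBump (hρ : 0 < ρ) :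
    9 / 16 * (1 / 2) ^ Module.finrank ℝ E * ρ ^ 4 * μ.real (ball 0 ρ) ≤
      ∫ x in ball 0 ρ, ballBump ρ x ∂μ := by
  have hhalf :
      μ.real (ball 0 (1 / 2 * ρ)) = (1 / 2) ^ Module.finrank ℝ E * μ.real (ball 0 ρ) := by
    rw [measureReal_def, measureReal_def, Measure.addHaar_ball_mul_of_pos μ 0 one_half_pos,
      ENNReal.toReal_mul, ENNReal.toReal_ofReal (by positivity)]
  have hint : IntegrableOn (ballBump ρ) (ball (0 : E) ρ) μ :=
    (differentiable_ballBump ρ).continuous.integrableOn_ball 0 ρ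
  calc 9 / 16 * (1 / 2) ^ Module.finrank ℝ E * ρ ^ 4 * μ.real (ball 0 ρ)
      = μ.real (ball 0 (1 / 2 * ρ)) • (9 / 16 * ρ ^ 4) := by rw [hhalf, smul_eq_mul]; ring
    _ ≤ ∫ x in ball 0 (1 / 2 * ρ), ballBump ρ x ∂μ :=
      setIntegral_ge_of_const_le measurableSet_ball measure_ball_lt_top.ne
        (fun x hx => le_ballBump (by rw [mem_ball_zero_iff] at hx; linarith))
        (hint.mono_set (ball_subset_ball (by linarith)))
    _ ≤ ∫ x in ball 0 ρ, ballBump ρ x ∂μ :=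
      setIntegral_mono_set hint (Eventually.of_forall fun x => ballBump_nonneg ρ x)
        (Eventually.of_forall (ball_subset_ball (by linarith) : ball (0 : E) (1 / 2 * ρ) ⊆ _))

end BallIntegrals

section CorrectedCoordinates

variable {d : ℕ} {ρ : ℝ} {φ : Fin d → EuclideanSpace ℝ (Fin d) → ℝ} (b : Fin d → ℝ)

local notation "𝔼" => EuclideanSpace ℝ (Fin d)

theorem continuous_pd {f : 𝔼 → ℝ} (hf : ContDiff ℝ 1 f) (j : Fin d) : Continuous (pd f j) :=
  (hf.continuous_fderiv one_ne_zero).clm_apply continuous_const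

theorem sum_pd_ballBump_sq_le (ρ : ℝ) (x : 𝔼) : ∑ j, pd (ballBump ρ) j x ^ 2 ≤ 16 * ρ ^ 6 := by
  have hsum : ∑ j, pd (ballBump ρ) j x ^ 2 = 16 * max (ρ ^ 2 - ‖x‖ ^ 2) 0 ^ 2 * ‖x‖ ^ 2 := by
    simp only [pd, fderiv_ballBump_apply, EuclideanSpace.inner_single_right, one_mul,
      RCLike.conj_to_real]
    rw [EuclideanSpace.real_norm_sq_eq x, Finset.mul_sum]
    exact Finset.sum_congr rfl fun j _ => by ring
  rw [hsum]
  rcases le_total (ρ ^ 2 - ‖x‖ ^ 2) 0 with h | h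
  · rw [max_eq_right h, zero_pow two_ne_zero, mul_zero, zero_mul]
    positivity
  · rw [max_eq_left h]
    nlinarith [sq_nonneg ‖x‖, sq_nonneg (ρ ^ 2 - 3 * ‖x‖ ^ 2), mul_nonneg h (sq_nonneg ‖x‖)]

theorem pd_corrected_eq (hφ : ∀ i, Differentiable ℝ (φ i)) (j : Fin d) (x : 𝔼) :
    pd (fun y => ∑ i, b i * (y i + φ i y)) j x = b j + pd (fun y => ∑ i, b i * φ i y) j x := by
  have hsplit : (fun y : 𝔼 => ∑ i, b i * (y i + φ i y)) =
      fun y => (∑ i, b i • EuclideanSpace.proj i : 𝔼 →L[ℝ] ℝ) y + ∑ i, b i * φ i y := by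
    ext y
    simp [mul_add, Finset.sum_add_distrib]
  have hw : DifferentiableAt ℝ (fun y => ∑ i, b i * φ i y) x := by fun_prop
  rw [pd, hsplit, fderiv_fun_add (ContinuousLinearMap.differentiableAt _) hw,
    ContinuousLinearMap.fderiv]
  simp [pd]

theorem mul_setIntegral_ballBump_eq (hρ : 0 ≤ ρ) (hφ : ∀ i, ContDiff ℝ 1 (φ i)) (j : Fin d) :
    b j * ∫ x in ball (0 : 𝔼) ρ, ballBump ρ x =
      (∫ x in ball 0 ρ, ballBump ρ x * pd (fun y => ∑ i, b i * (y i + φ i y)) j x) +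
        ∫ x in ball 0 ρ, pd (ballBump ρ) j x * ∑ i, b i * φ i x := by
  have hw : ContDiff ℝ 1 fun y => ∑ i, b i * φ i y :=
    ContDiff.sum fun i _ => contDiff_const.mul (hφ i)
  have hη := (differentiable_ballBump (E := 𝔼) ρ).continuous
  have hibp := setIntegral_ballBump_mul_fderiv volume hρ hw (EuclideanSpace.single j 1)
  simp_rw [pd_corrected_eq b (fun i => (hφ i).differentiable one_ne_zero), mul_add]
  rw [integral_add (f := fun x => ballBump ρ x * b j)
      (g := fun x => ballBump ρ x * pd (fun y => ∑ i, b i * φ i y) j x)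
      ((hη.mul continuous_const).integrableOn_ball 0 ρ)
      ((hη.mul (continuous_pd hw j)).integrableOn_ball 0 ρ), integral_mul_const]
  simp only [pd, hibp]
  ring

theorem sum_sq_mul_sq_setIntegral_ballBump_le (hρ : 0 ≤ ρ) (hφ : ∀ i, ContDiff ℝ 1 (φ i)) :
    (∑ i, b i ^ 2) * (∫ x in ball (0 : 𝔼) ρ, ballBump ρ x) ^ 2 ≤
      2 * (∫ x in ball (0 : 𝔼) ρ, ballBump ρ x ^ 2) *
          (∫ x in ball 0 ρ, ∑ j, pd (fun y => ∑ i, b i * (y i + φ i y)) j x ^ 2) +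
        2 * (∫ x in ball (0 : 𝔼) ρ, ∑ j, pd (ballBump ρ) j x ^ 2) *
          ∫ x in ball 0 ρ, (∑ i, b i * φ i x) ^ 2 := by
  have hu : ContDiff ℝ 1 fun y : 𝔼 => ∑ i, b i * (y i + φ i y) :=
    ContDiff.sum fun i _ => contDiff_const.mul ((EuclideanSpace.proj i).contDiff.add (hφ i))
  have hw : Continuous fun y => ∑ i, b i * φ i y :=
    continuous_finsetSum _ fun i _ => continuous_const.mul (hφ i).continuous
  have hη := (differentiable_ballBump (E := 𝔼) ρ).continuous
  have hη' : ∀ j : Fin d, Continuous (pd (ballBump ρ) j) := fun j =>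
    continuous_fderiv_ballBump_apply ρ (EuclideanSpace.single j 1)
  have hint : ∀ g : 𝔼 → ℝ, Continuous g → IntegrableOn g (ball 0 ρ) :=
    fun g hg => hg.integrableOn_ball 0 ρ
  have hcoord : ∀ j, b j ^ 2 * (∫ x in ball (0 : 𝔼) ρ, ballBump ρ x) ^ 2 ≤
      2 * (∫ x in ball (0 : 𝔼) ρ, ballBump ρ x ^ 2) *
          (∫ x in ball 0 ρ, pd (fun y => ∑ i, b i * (y i + φ i y)) j x ^ 2) +
        2 * (∫ x in ball (0 : 𝔼) ρ, pd (ballBump ρ) j x ^ 2) *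
          ∫ x in ball 0 ρ, (∑ i, b i * φ i x) ^ 2 := by
    intro j
    have hcs₁ := sq_integral_mul_le_integral_sq_mul_integral_sq
      (hint _ (hη.pow 2)) (hint _ ((continuous_pd hu j).pow 2))
      (hint _ (hη.mul (continuous_pd hu j)))
    have hcs₂ := sq_integral_mul_le_integral_sq_mul_integral_sq
      (hint _ ((hη' j).pow 2)) (hint _ (hw.pow 2)) (hint _ ((hη' j).mul hw))
    rw [← mul_pow, mul_setIntegral_ballBump_eq b hρ hφ j]
    nlinarith [sq_nonneg
      ((∫ x in ball 0 ρ, ballBump ρ x * pd (fun y => ∑ i, b i * (y i + φ i y)) j x) -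
        ∫ x in ball 0 ρ, pd (ballBump ρ) j x * ∑ i, b i * φ i x)]
  rw [integral_finsetSum (μ := volume.restrict (ball 0 ρ))
      (f := fun j x => pd (fun y => ∑ i, b i * (y i + φ i y)) j x ^ 2) _
      fun j _ => hint _ ((continuous_pd hu j).pow 2),
    integral_finsetSum (μ := volume.restrict (ball 0 ρ)) (f := fun j x => pd (ballBump ρ) j x ^ 2) _
      fun j _ => hint _ ((hη' j).pow 2),
    Finset.mul_sum, Finset.mul_sum, Finset.sum_mul, Finset.sum_mul, ← Finset.sum_add_distrib]
  exact Finset.sum_le_sum fun j _ => hcoord j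

theorem sq_mul_sum_sq_le_setAverage (hρ : 0 < ρ) (hφ : ∀ i, ContDiff ℝ 1 (φ i)) :
    (9 / 16 * (1 / 2) ^ d) ^ 2 * ∑ i, b i ^ 2 ≤
      2 * (⨍ x in ball (0 : 𝔼) ρ, ∑ j, pd (fun y => ∑ i, b i * (y i + φ i y)) j x ^ 2) +
        32 * (ρ⁻¹ ^ 2 * ⨍ x in ball (0 : 𝔼) ρ, ∑ i, φ i x ^ 2) * ∑ i, b i ^ 2 := by
  set B := ball (0 : 𝔼) ρ
  set V := volume.real B
  set X := ∑ i, b i ^ 2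
  set S := ⨍ x in B, ∑ j, pd (fun y => ∑ i, b i * (y i + φ i y)) j x ^ 2
  set P := ⨍ x in B, ∑ i, φ i x ^ 2
  have hV : 0 < V := ENNReal.toReal_pos (measure_ball_pos _ _ hρ).ne' measure_ball_lt_top.ne
  have hS : ∫ x in B, ∑ j, pd (fun y => ∑ i, b i * (y i + φ i y)) j x ^ 2 = V * S :=
    (measure_smul_setAverage _ measure_ball_lt_top.ne).symm
  have hP : ∫ x in B, ∑ i, φ i x ^ 2 = V * P :=
    (measure_smul_setAverage _ measure_ball_lt_top.ne).symm
  have hA := le_setIntegral_ballBump (E := 𝔼) volume hρ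
  rw [finrank_euclideanSpace_fin] at hA
  have hη₂ : ∫ x in B, ballBump ρ x ^ 2 ≤ ρ ^ 8 * V :=
    setIntegral_le_mul_measureReal measure_ball_lt_top fun x _ => by
      rw [abs_of_nonneg (sq_nonneg _), show ρ ^ 8 = (ρ ^ 4) ^ 2 by ring]
      exact pow_le_pow_left₀ (ballBump_nonneg ρ x) (ballBump_le ρ x) 2
  have hDη : ∫ x in B, ∑ j, pd (ballBump ρ) j x ^ 2 ≤ 16 * ρ ^ 6 * V :=
    setIntegral_le_mul_measureReal measure_ball_lt_top fun x _ => by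
      rw [abs_of_nonneg (Finset.sum_nonneg fun j _ => sq_nonneg _)]
      exact sum_pd_ballBump_sq_le ρ x
  have hw : ∫ x in B, (∑ i, b i * φ i x) ^ 2 ≤ X * (V * P) := by
    have hφc := fun i => (hφ i).continuous
    have hint : Continuous fun x => X * ∑ i, φ i x ^ 2 := by fun_prop
    rw [← hP, ← integral_const_mul]
    exact integral_mono_of_nonneg (.of_forall fun x => sq_nonneg _) (hint.integrableOn_ball 0 ρ)
      (.of_forall fun x => Finset.sum_mul_sq_le_sq_mul_sq _ _ _)
  have hkey := sum_sq_mul_sq_setIntegral_ballBump_le b hρ.le hφ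
  have hVS : 0 ≤ V * S := hS ▸ integral_nonneg fun x => Finset.sum_nonneg fun j _ => sq_nonneg _
  refine le_of_mul_le_mul_left ?_ (by positivity : 0 < ρ ^ 8 * V ^ 2)
  calc ρ ^ 8 * V ^ 2 * ((9 / 16 * (1 / 2) ^ d) ^ 2 * X)
      = X * (9 / 16 * (1 / 2) ^ d * ρ ^ 4 * V) ^ 2 := by ring
    _ ≤ X * (∫ x in B, ballBump ρ x) ^ 2 := by gcongr
    _ ≤ _ := hS ▸ hkey
    _ ≤ 2 * (ρ ^ 8 * V) * (V * S) + 2 * (16 * ρ ^ 6 * V) * (X * (V * P)) := by gcongr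
    _ = ρ ^ 8 * V ^ 2 * (2 * S + 32 * (ρ⁻¹ ^ 2 * P) * X) := by
      field_simp
      ring

end CorrectedCoordinates

theorem corrected_coordinates_independence_general (d : ℕ) :
    ∃ ε0 : ℝ, 0 < ε0 ∧ ∃ C : ℝ, 0 < C ∧
      ∀ (ρ : ℝ), 0 < ρ →
        ∀ φ : Fin d → EuclideanSpace ℝ (Fin d) → ℝ,
          (∀ i, ContDiff ℝ 1 (φ i)) →
          ρ⁻¹ ^ 2 * (⨍ x in ball (0 : EuclideanSpace ℝ (Fin d)) ρ, ∑ i, (φ i x) ^ 2)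
            ≤ ε0 ^ 2 →
          ∀ b : Fin d → ℝ,
            ∑ i, (b i) ^ 2
              ≤ C * ⨍ x in ball (0 : EuclideanSpace ℝ (Fin d)) ρ,
                  ∑ j, (pd (fun y => ∑ i, b i * (y i + φ i y)) j x) ^ 2 := by
  set κ : ℝ := 9 / 16 * (1 / 2) ^ d
  have hκ : 0 < κ := by positivity
  refine ⟨κ / 8, by positivity, 4 / κ ^ 2, by positivity, fun ρ hρ φ hφ hsmall b => ?_⟩
  have hest : κ ^ 2 * _ ≤ _ := sq_mul_sum_sq_le_setAverage b hρ hφ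
  have hX : 0 ≤ ∑ i, b i ^ 2 := Finset.sum_nonneg fun i _ => sq_nonneg _
  rw [div_mul_eq_mul_div, le_div_iff₀ (by positivity)]
  linarith [mul_le_mul_of_nonneg_right hsmall hX]

/-- Quantified linear independence of the corrected coordinates `x_i + φ_i`: if the
corrector `φ` is small in the `L²`-averaged sense relative to the scale `ρ`, then
`|b|² ≤ C(d) ⨍_{B_ρ} |∇(b_i(x_i + φ_i))|²` for all `b ∈ ℝ^d`. -/
theorem corrected_coordinates_independence (d : ℕ) (hd : 2 ≤ d) :
    ∃ ε0 : ℝ, 0 < ε0 ∧ ∃ C : ℝ, 0 < C ∧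
      ∀ (ρ : ℝ), 0 < ρ →
        ∀ φ : Fin d → EuclideanSpace ℝ (Fin d) → ℝ,
          (∀ i, ContDiff ℝ 1 (φ i)) →
          ρ⁻¹ ^ 2 * (⨍ x in ball (0 : EuclideanSpace ℝ (Fin d)) ρ, ∑ i, (φ i x) ^ 2)
            ≤ ε0 ^ 2 →
          ∀ b : Fin d → ℝ,
            ∑ i, (b i) ^ 2
              ≤ C * ⨍ x in ball (0 : EuclideanSpace ℝ (Fin d)) ρ,
                  ∑ j, (pd (fun y => ∑ i, b i * (y i + φ i y)) j x) ^ 2 :=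
  corrected_coordinates_independence_general d
end
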